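/- For every integer q ≥ 4 and every proper coloring x ∈ {1,…,q}^n with n ≥ 1, ∑_{i=1}^n D(n−2i+1)·P(x̂_i) = 0. -/

import Mathlib

/-!
Multiply the sum by `D n`, which is positive for `q ≥ 4`. For proper `x̂ᵢ`, expand `D n · P(x̂ᵢ)`
by the recursion and subtract `C(n-2i-1)` times the claim for the shorter word `x̂ᵢ`: the product
formula `D a · C b - C a · D b = D (a - b)` turns row `i` into `∑ⱼ D(2j-2i+1) · P(x̂ᵢⱼ)`. When `x̂ᵢ`
is not proper this row vanishes as well: `x̂ᵢ` has two equal adjacent letters, only their two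
deletions give proper words, these coincide, and they carry the weights `D(-1) = -D(1)`.
Summed over `i`, the two orders of deleting the same pair of letters carry opposite weights, since
`D` is odd, so the double sum is `0`.
-/

open Polynomial Polynomial.Chebyshev

/-- `C n = T_{|n|}(√q/2)`; Mathlib's `T` is even in its integer index. -/
noncomputable def C (q : ℝ) (n : ℤ) : ℝ := (T ℝ n).eval (Real.sqrt q / 2)

/-- `D n = √q · U_{n-1}(√q/2)`, the odd extension (`D 0 = 0`). -/
noncomputable def D (q : ℝ) (n : ℤ) : ℝ := Real.sqrt q * (U ℝ (n - 1)).eval (Real.sqrt q / 2)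

/-- A word is a proper coloring if no two consecutive letters are equal. -/
def Proper {q : ℕ} (x : List (Fin q)) : Prop := x.Chain' (· ≠ ·)

instance {q : ℕ} (x : List (Fin q)) : Decidable (Proper x) := by
  unfold Proper List.Chain'; infer_instance

/-- The recursively defined cylinder measure: `P [] = 1`, `P x = 0` for non-proper `x`,
and `P x = (1/D(n+1)) ∑_{i=1}^n C(n-2i+1) P(x̂ᵢ)` for proper `x` of length `n`,
where `x̂ᵢ` deletes the `i`-th letter (here indexed from `0`, so the coefficient of
`x.eraseIdx i` is `C(n - 2(i+1) + 1) = C(n - 2i - 1)`). -/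
noncomputable def P (q : ℕ) : List (Fin q) → ℝ
  | [] => 1
  | a :: l =>
    if Proper (a :: l) then
      (1 / D q (((a :: l).length : ℤ) + 1)) *
        ∑ i : Fin (a :: l).length,
          C q (((a :: l).length : ℤ) - 2 * (i : ℤ) - 1) * P q ((a :: l).eraseIdx i)
    else 0
termination_by x => x.length
decreasing_by
  have := i.isLt
  simp only [List.length_eraseIdx, this, if_pos]
  omega

open Finset

theorem U_mul_T (R : Type*) [CommRing R] (m k : ℤ) :
    2 * U R m * T R k = U R (m + k) + U R (m - k) := by
  induction k using Polynomial.Chebyshev.induct with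
  | zero => simp [two_mul]
  | one => rw [T_one]; linear_combination -(U_add_one R m)
  | add_two k ih₁ ih₂ =>
    linear_combination (norm := ring_nf) 2 * U R m * T_add_two R k - U_sub_two R (m - k)
      - U_add_two R (m + k) - ih₂ + 2 * (X : R[X]) * ih₁
  | neg_add_one k ih₁ ih₂ =>
    linear_combination (norm := ring_nf) 2 * U R m * T_add_two R (-k - 1)
      - U_sub_two R (m - (-k - 1)) - U_add_two R (m + (-k - 1)) - ih₂ + 2 * (X : R[X]) * ih₁

theorem one_le_U_eval {R : Type*} [CommRing R] [LinearOrder R] [IsStrictOrderedRing R]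
    {t : R} (ht : 1 ≤ t) (k : ℕ) : 1 ≤ (U R k).eval t := by
  suffices h : ∀ k : ℕ, 1 ≤ (U R k).eval t ∧ (U R k).eval t ≤ (U R (k + 1)).eval t from (h k).1
  intro k
  induction k with
  | zero =>
    simp only [Nat.cast_zero, zero_add, U_zero, U_one, eval_one, eval_mul, eval_ofNat, eval_X]
    constructor <;> linarith
  | succ k ih =>
    have hrec := congrArg (eval t) (U_add_two R k)
    simp only [eval_sub, eval_mul, eval_ofNat, eval_X] at hrec
    push_cast
    rw [show (k : ℤ) + 1 + 1 = k + 2 by ring, hrec]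
    constructor <;> nlinarith

section

variable (q : ℝ)

theorem D_zero : D q 0 = 0 := by
  simp [D, U_neg_one]

theorem D_neg (n : ℤ) : D q (-n) = -D q n := by
  rw [D, D, U_neg_sub_one, eval_neg, mul_neg]

theorem D_mul_C_sub_C_mul_D (a b : ℤ) : D q a * C q b - C q a * D q b = D q (a - b) := by
  have hUT : ∀ m k : ℤ, 2 * (U ℝ m).eval (√q / 2) * (T ℝ k).eval (√q / 2)
      = (U ℝ (m + k)).eval (√q / 2) + (U ℝ (m - k)).eval (√q / 2) := fun m k => by
    simpa using congrArg (eval (√q / 2)) (U_mul_T ℝ m k)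
  have hU : (U ℝ (b - 1 - a)).eval (√q / 2) = -(U ℝ (a - b - 1)).eval (√q / 2) := by
    rw [show b - 1 - a = -(a - b - 1) - 2 by ring, U_neg_sub_two, eval_neg]
  unfold D _root_.C
  linear_combination (norm := ring_nf) (√q / 2) * (hUT (a - 1) b - hUT (b - 1) a - hU)

variable {q}

theorem D_pos (hq : 4 ≤ q) {m : ℤ} (hm : 1 ≤ m) : 0 < D q m := by
  have hs : 2 ≤ √q := Real.le_sqrt_of_sq_le (by linarith)
  obtain ⟨k, rfl⟩ : ∃ k : ℕ, m = k + 1 := ⟨(m - 1).toNat, by omega⟩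
  rw [D, add_sub_cancel_right]
  have := one_le_U_eval (show (1 : ℝ) ≤ √q / 2 by linarith) k
  positivity

end

section Lists

variable {α : Type*}

theorem eraseIdx_eraseIdx_of_le (l : List α) {i j : ℕ} (h : i ≤ j) :
    (l.eraseIdx (j + 1)).eraseIdx i = (l.eraseIdx i).eraseIdx j := by
  apply List.ext_getElem?
  intro m
  simp only [List.getElem?_eraseIdx]
  split_ifs <;> first | rfl | omega

theorem eraseIdx_eq_eraseIdx_succ {l : List α} {k : ℕ} (h : l[k]? = l[k + 1]?) :
    l.eraseIdx k = l.eraseIdx (k + 1) := by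
  apply List.ext_getElem?
  intro m
  simp only [List.getElem?_eraseIdx]
  split_ifs with h₁ h₂ h₂
  · rfl
  · omega
  · obtain rfl : m = k := by omega
    exact h.symm
  · rfl

theorem sum_range_sum_range_eraseIdx_eraseIdx_eq_zero {R : Type*} [Ring R] (w : ℤ → R)
    (hw : ∀ k, w (-k) = -w k) (f : List α → R) (l : List α) :
    ∑ i ∈ range l.length, ∑ j ∈ range (l.length - 1),
      w (2 * j - 2 * i + 1) * f ((l.eraseIdx i).eraseIdx j) = 0 := by
  rw [← sum_product']
  -- `(i, j)` and its image delete the same two letters of `l`, in the opposite order.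
  refine sum_involution (fun p _ => if p.1 ≤ p.2 then (p.2 + 1, p.1) else (p.2, p.1 - 1))
    ?_ ?_ ?_ ?_
  · rintro ⟨i, j⟩ -
    split_ifs with h <;> dsimp only at h ⊢
    · rw [eraseIdx_eraseIdx_of_le l h, show 2 * (i : ℤ) - 2 * ((j + 1 : ℕ) : ℤ) + 1 =
        -(2 * j - 2 * i + 1) by push_cast; ring, hw, neg_mul, add_neg_cancel]
    · obtain ⟨i, rfl⟩ : ∃ i', i = i' + 1 := ⟨i - 1, by omega⟩
      rw [Nat.add_sub_cancel, eraseIdx_eraseIdx_of_le l (by omega : j ≤ i), show 2 * (i : ℤ) -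
        2 * j + 1 = -(2 * j - 2 * ((i + 1 : ℕ) : ℤ) + 1) by push_cast; ring, hw, neg_mul,
        add_neg_cancel]
  · rintro ⟨i, j⟩ - -
    dsimp only
    split_ifs <;> simp only [ne_eq, Prod.mk.injEq, not_and] <;> omega
  · rintro ⟨i, j⟩ hp
    simp only [mem_product, mem_range] at hp ⊢
    split_ifs <;> omega
  · rintro ⟨i, j⟩ -
    split_ifs with h₁ h₂ h₂ <;> dsimp only at h₁ h₂ <;> exact Prod.ext (by omega) (by omega)

variable {q : ℕ}

theorem not_proper_iff {l : List (Fin q)} :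
    ¬Proper l ↔ ∃ k, k + 1 < l.length ∧ l[k]? = l[k + 1]? := by
  change ¬List.IsChain _ l ↔ _
  rw [List.isChain_iff_getElem]
  push Not
  refine exists_congr fun k => ⟨fun ⟨hk, he⟩ => ⟨hk, ?_⟩, fun ⟨hk, he⟩ => ⟨hk, ?_⟩⟩
  · rw [List.getElem?_eq_getElem (by omega), List.getElem?_eq_getElem hk, he]
  · rw [List.getElem?_eq_getElem (by omega), List.getElem?_eq_getElem hk] at he
    exact Option.some_injective _ he

theorem not_proper_eraseIdx {l : List (Fin q)} {k j : ℕ} (hk : k + 1 < l.length)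
    (he : l[k]? = l[k + 1]?) (hjk : j ≠ k) (hjk' : j ≠ k + 1) : ¬Proper (l.eraseIdx j) := by
  rw [not_proper_iff]
  rcases lt_or_gt_of_ne hjk with hj | hj
  · refine ⟨k - 1, ?_, ?_⟩
    · rw [List.length_eraseIdx_of_lt (by omega)]; omega
    · rw [List.getElem?_eraseIdx_of_ge (by omega), List.getElem?_eraseIdx_of_ge (by omega),
        Nat.sub_add_cancel (by omega), he]
  · refine ⟨k, ?_, ?_⟩
    · rw [List.length_eraseIdx]; split_ifs <;> omega
    · rw [List.getElem?_eraseIdx_of_lt (by omega), List.getElem?_eraseIdx_of_lt (by omega), he]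

theorem Proper.exists_of_not_proper_eraseIdx {x : List (Fin q)} (hx : Proper x) {i : ℕ}
    (hi : ¬Proper (x.eraseIdx i)) : ∃ k, i = k + 1 ∧ k + 2 < x.length ∧ x[k]? = x[k + 2]? := by
  have hix : i < x.length := by
    by_contra! h
    exact hi (by rwa [List.eraseIdx_of_length_le h])
  obtain ⟨k, hk, he⟩ := not_proper_iff.mp hi
  rw [List.length_eraseIdx_of_lt hix] at hk
  simp only [List.getElem?_eraseIdx] at he
  have adjacent_ne : ∀ m, m + 1 < x.length → x[m]? ≠ x[m + 1]? :=
    fun m hm h => not_proper_iff.mpr ⟨m, hm, h⟩ hx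
  split_ifs at he with h₁ h₂ h₂
  · exact absurd he (adjacent_ne k (by omega))
  · exact ⟨k, by omega, by omega, he⟩
  · omega
  · exact absurd he (adjacent_ne (k + 1) (by omega))

end Lists

noncomputable def deletionSum (q : ℕ) (w : ℤ → ℝ) (x : List (Fin q)) : ℝ :=
  ∑ i ∈ range x.length, w (x.length - 2 * i - 1) * P q (x.eraseIdx i)

section

variable {q : ℕ}

theorem P_eq_zero_of_not_proper {x : List (Fin q)} (hx : ¬Proper x) : P q x = 0 := by
  cases x with
  | nil => exact absurd List.isChain_nil hx
  | cons a l => rw [P, if_neg hx]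

theorem D_mul_P (hq : 4 ≤ q) {x : List (Fin q)} (hx : Proper x) (hx₀ : x ≠ []) :
    D q (x.length + 1) * P q x = deletionSum q (C q) x := by
  obtain ⟨a, l, rfl⟩ := List.exists_cons_of_ne_nil hx₀
  rw [P, if_pos hx, ← mul_assoc, mul_one_div_cancel (D_pos (by exact_mod_cast hq) (by omega)).ne',
    one_mul, deletionSum, Fin.sum_univ_eq_sum_range
      (fun i => C q ((a :: l).length - 2 * i - 1) * P q ((a :: l).eraseIdx i))]

theorem D_mul_deletionSum_C_sub_C_mul_deletionSum_D (a : ℤ) (x : List (Fin q)) :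
    D q a * deletionSum q (C q) x - C q a * deletionSum q (D q) x =
      deletionSum q (fun b => D q (a - b)) x := by
  rw [deletionSum, deletionSum, deletionSum, mul_sum, mul_sum, ← sum_sub_distrib]
  refine sum_congr rfl fun i _ => ?_
  rw [← D_mul_C_sub_C_mul_D q a]
  ring

theorem deletionSum_eq_of_getElem?_eq (w : ℤ → ℝ) {y : List (Fin q)} {k : ℕ}
    (hk : k + 1 < y.length) (he : y[k]? = y[k + 1]?) :
    deletionSum q w y =
      (w (y.length - 2 * k - 1) + w (y.length - 2 * k - 3)) * P q (y.eraseIdx k) := by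
  rw [deletionSum, sum_eq_add_of_mem k (k + 1) (mem_range.2 (by omega)) (mem_range.2 hk) (by omega),
    ← eraseIdx_eq_eraseIdx_succ he]
  · rw [show (y.length : ℤ) - 2 * ((k + 1 : ℕ) : ℤ) - 1 = y.length - 2 * k - 3 by push_cast; ring]
    ring
  · rintro j - ⟨hj, hj'⟩
    rw [P_eq_zero_of_not_proper (not_proper_eraseIdx hk he hj hj'), mul_zero]

theorem D_mul_D_mul_P_eraseIdx (hq : 4 ≤ q) {x : List (Fin q)} (hx : Proper x) {i : ℕ}
    (hi : i < x.length) (hn : 2 ≤ x.length)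
    (ih : Proper (x.eraseIdx i) → deletionSum q (D q) (x.eraseIdx i) = 0) :
    D q x.length * (D q (x.length - 2 * i - 1) * P q (x.eraseIdx i)) =
      deletionSum q (fun b => D q (x.length - 2 * i - 1 - b)) (x.eraseIdx i) := by
  have hlen : (x.eraseIdx i).length + 1 = x.length := by
    rw [List.length_eraseIdx_of_lt hi]; omega
  by_cases hp : Proper (x.eraseIdx i)
  · rw [mul_left_comm, ← hlen, Nat.cast_add_one,
      D_mul_P hq hp (List.ne_nil_of_length_pos (by omega)),
      ← D_mul_deletionSum_C_sub_C_mul_deletionSum_D, ih hp, mul_zero, sub_zero]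
  · obtain ⟨k, rfl, hk, he⟩ := hx.exists_of_not_proper_eraseIdx hp
    have hy : (x.eraseIdx (k + 1))[k]? = (x.eraseIdx (k + 1))[k + 1]? := by
      rwa [List.getElem?_eraseIdx_of_lt (by omega), List.getElem?_eraseIdx_of_ge le_rfl]
    rw [P_eq_zero_of_not_proper hp, mul_zero, mul_zero,
      deletionSum_eq_of_getElem?_eq _ (by omega) hy, ← hlen]
    set m := (x.eraseIdx (k + 1)).length
    push_cast
    rw [show (m + 1 : ℤ) - 2 * (k + 1) - 1 - (m - 2 * k - 1) = -1 by ring,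
      show (m + 1 : ℤ) - 2 * (k + 1) - 1 - (m - 2 * k - 3) = 1 by ring,
      D_neg, neg_add_cancel, zero_mul]

theorem deletionSum_D_eq_zero (hq : 4 ≤ q) {x : List (Fin q)} (hx : Proper x) :
    deletionSum q (D q) x = 0 := by
  rcases Nat.lt_or_ge x.length 2 with hn | hn
  · interval_cases h : x.length
    · simp [deletionSum, h]
    · simp [deletionSum, h, D_zero]
  have hD : 0 < D q x.length := D_pos (by exact_mod_cast hq) (by omega)
  refine (mul_eq_zero.mp ?_).resolve_left hD.ne'
  calc D q x.length * deletionSum q (D q) x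
      = ∑ i ∈ range x.length,
          deletionSum q (fun b => D q (x.length - 2 * i - 1 - b)) (x.eraseIdx i) := by
        rw [deletionSum, mul_sum]
        exact sum_congr rfl fun i hi => D_mul_D_mul_P_eraseIdx hq hx (mem_range.1 hi) hn
          fun hp => deletionSum_D_eq_zero hq hp
    _ = ∑ i ∈ range x.length, ∑ j ∈ range (x.length - 1),
          D q (2 * j - 2 * i + 1) * P q ((x.eraseIdx i).eraseIdx j) := by
        refine sum_congr rfl fun i hi => ?_
        rw [deletionSum, List.length_eraseIdx_of_lt (mem_range.1 hi)]
        refine sum_congr rfl fun j _ => ?_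
        rw [show (x.length : ℤ) - 2 * i - 1 - ((x.length - 1 : ℕ) - 2 * j - 1) = 2 * j - 2 * i + 1
          by have := mem_range.1 hi; omega]
    _ = 0 := sum_range_sum_range_eraseIdx_eraseIdx_eq_zero (D q) (D_neg q) (P q) x
termination_by x.length
decreasing_by
  rw [List.length_eraseIdx_of_lt (mem_range.1 hi)]
  omega

end

theorem D_sum_eq_zero_general (q : ℕ) (hq : 4 ≤ q) (x : List (Fin q)) (hx : Proper x) :
    ∑ i : Fin x.length, D q ((x.length : ℤ) - 2 * (i : ℤ) - 1) * P q (x.eraseIdx i) = 0 := by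
  exact (Fin.sum_univ_eq_sum_range _ _).trans (deletionSum_D_eq_zero hq hx)

theorem D_sum_eq_zero (q : ℕ) (hq : 4 ≤ q) (x : List (Fin q)) (hx : Proper x)
    (hn : 1 ≤ x.length) :
    ∑ i : Fin x.length, D q ((x.length : ℤ) - 2 * (i : ℤ) - 1) * P q (x.eraseIdx i) = 0 :=
  D_sum_eq_zero_general q hq x hx
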